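/- arXiv:1402.5290 — 2 statements merged into one kernel-verified Lean document; each statement's English description precedes it below -/
import Mathlib

section
/- Define σ_m²(t) := 2 e^{-2μ∞ t} ∫_0^t e^{2μ∞ s} π^T (Λ - ϱ(s)M) D (Λ - ϱ(s)M) 1 ds with ϱ(s) = ϱ(1 - e^{-μ∞ s}), ϱ = λ∞/μ∞. Then σ_m²(t) = U·(1/μ∞)G_{0,2}(t) + Û·(ϱ/μ∞)(2G_{1,2}(t) - G_{0,2}(t)) + Ǔ·(ϱ²/μ∞)(G_{0,2}(t) - 4G_{1,2}(t) + 2μ∞ t e^{-2μ∞ t}), where G_{m,n}(t) := e^{-mμ∞ t} - e^{-nμ∞ t}, U := π^T Λ D Λ 1, Û := π^T M D Λ 1 + π^T Λ D M 1, Ǔ := π^T M D M 1. -/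
/-!
Expanding the quadratic form `πᵀ(Λ - cM) D (Λ - cM) 1 = U - c Û + c² Ǔ` and substituting
`c = ϱ(1 - e^{-μ∞ s})`, the weighted integrand becomes a combination of `e^{2μ∞ s}`, `e^{μ∞ s}`
and `1`. Integrating these over `[0, t]` and damping by `2e^{-2μ∞ t}` turns them into
`G_{0,2}(t) / μ∞`, `2 G_{1,2}(t) / μ∞` and `2t e^{-2μ∞ t}` respectively.
-/

open Matrix Real

theorem Matrix.vecMul_sub_smul_mul_mul_sub_smul_dotProduct {n R : Type*} [Fintype n] [CommRing R]
    (v w : n → R) (L M D : Matrix n n R) (c : R) :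
    v ᵥ* ((L - c • M) * D * (L - c • M)) ⬝ᵥ w
      = v ᵥ* (L * D * L) ⬝ᵥ w - c * (v ᵥ* (M * D * L) ⬝ᵥ w + v ᵥ* (L * D * M) ⬝ᵥ w)
        + c ^ 2 * (v ᵥ* (M * D * M) ⬝ᵥ w) := by
  have expand : (L - c • M) * D * (L - c • M)
      = L * D * L - c • (M * D * L) - c • (L * D * M) + (c * c) • (M * D * M) := by
    simp only [sub_mul, mul_sub, Matrix.smul_mul, Matrix.mul_smul, smul_smul]
    abel
  rw [expand]
  simp only [vecMul_add, vecMul_sub, vecMul_smul, add_dotProduct, sub_dotProduct,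
    smul_dotProduct, smul_eq_mul]
  ring

theorem integral_exp_two_mul_add_exp_add_const {a : ℝ} (ha : a ≠ 0) (α β γ t : ℝ) :
    ∫ s in (0 : ℝ)..t, (α * exp (2 * a * s) + β * exp (a * s) + γ)
      = α * (exp (2 * a * t) - 1) / (2 * a) + β * (exp (a * t) - 1) / a + γ * t := by
  have hderiv : ∀ s, HasDerivAt
      (fun s => α * exp (2 * a * s) / (2 * a) + β * exp (a * s) / a + γ * s)
      (α * exp (2 * a * s) + β * exp (a * s) + γ) s := by
    intro s
    have h2 : HasDerivAt (fun s => exp (2 * a * s)) (exp (2 * a * s) * (2 * a)) s := by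
      simpa using ((hasDerivAt_id s).const_mul (2 * a)).exp
    have h1 : HasDerivAt (fun s => exp (a * s)) (exp (a * s) * a) s := by
      simpa using ((hasDerivAt_id s).const_mul a).exp
    refine ((((h2.const_mul α).div_const (2 * a)).add ((h1.const_mul β).div_const a)).add
      ((hasDerivAt_id s).const_mul γ)).congr_deriv ?_
    field_simp
  rw [intervalIntegral.integral_eq_sub_of_hasDerivAt (fun s _ => hderiv s)
    ((by fun_prop : Continuous _).intervalIntegrable _ _)]
  simp only [mul_zero, exp_zero]
  ring

theorem two_mul_exp_neg_mul_integral_exp_two_mul_add_exp_add_const {a : ℝ} (ha : a ≠ 0)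
    (α β γ t : ℝ) :
    2 * exp (-2 * a * t) * ∫ s in (0 : ℝ)..t, (α * exp (2 * a * s) + β * exp (a * s) + γ)
      = α * (1 - exp (-2 * a * t)) / a + 2 * β * (exp (-a * t) - exp (-2 * a * t)) / a
        + 2 * γ * t * exp (-2 * a * t) := by
  rw [integral_exp_two_mul_add_exp_add_const ha]
  have hx : exp (a * t) ≠ 0 := (exp_pos _).ne'
  have h2 : exp (2 * a * t) = exp (a * t) ^ 2 := by rw [← exp_nat_mul]; ring_nf
  have hm1 : exp (-a * t) = (exp (a * t))⁻¹ := by rw [← exp_neg]; ring_nf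
  have hm2 : exp (-2 * a * t) = (exp (a * t) ^ 2)⁻¹ := by rw [← h2, ← exp_neg]; ring_nf
  rw [h2, hm1, hm2]
  field_simp

theorem transient_variance_closed_form_general (d : ℕ)
    (pv : Fin d → ℝ)
    (D : Matrix (Fin d) (Fin d) ℝ)
    (Lam Mm : Matrix (Fin d) (Fin d) ℝ)
    (muinf : ℝ)
    (hmuinfpos : 0 < muinf)
    (ϱc : ℝ)
    (ϱ : ℝ → ℝ) (hϱ : ∀ s, ϱ s = ϱc * (1 - Real.exp (-muinf * s)))
    (σm2 : ℝ → ℝ)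
    (hσ : ∀ t, σm2 t = 2 * Real.exp (-2 * muinf * t)
      * ∫ s in (0 : ℝ)..t, Real.exp (2 * muinf * s)
          * (pv ᵥ* ((Lam - ϱ s • Mm) * D * (Lam - ϱ s • Mm)) ⬝ᵥ (fun _ => (1 : ℝ))))
    (G : ℕ → ℕ → ℝ → ℝ)
    (hG : ∀ m n t, G m n t = Real.exp (-(m : ℝ) * muinf * t) - Real.exp (-(n : ℝ) * muinf * t))
    (U Uhat Ucheck : ℝ)
    (hU : U = pv ᵥ* (Lam * D * Lam) ⬝ᵥ (fun _ => (1 : ℝ)))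
    (hUhat : Uhat = pv ᵥ* (Mm * D * Lam) ⬝ᵥ (fun _ => (1 : ℝ))
      + pv ᵥ* (Lam * D * Mm) ⬝ᵥ (fun _ => (1 : ℝ)))
    (hUcheck : Ucheck = pv ᵥ* (Mm * D * Mm) ⬝ᵥ (fun _ => (1 : ℝ))) :
    ∀ t, 0 ≤ t →
      σm2 t = U * (1 / muinf) * G 0 2 t
        + Uhat * (ϱc / muinf) * (2 * G 1 2 t - G 0 2 t)
        + Ucheck * (ϱc ^ 2 / muinf)
            * (G 0 2 t - 4 * G 1 2 t + 2 * muinf * t * Real.exp (-2 * muinf * t)) := by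
  intro t _
  have integrand_eq : ∀ s, exp (2 * muinf * s)
        * (pv ᵥ* ((Lam - ϱ s • Mm) * D * (Lam - ϱ s • Mm)) ⬝ᵥ (fun _ => (1 : ℝ)))
      = (U - ϱc * Uhat + ϱc ^ 2 * Ucheck) * exp (2 * muinf * s)
        + (ϱc * Uhat - 2 * ϱc ^ 2 * Ucheck) * exp (muinf * s) + ϱc ^ 2 * Ucheck := by
    intro s
    rw [vecMul_sub_smul_mul_mul_sub_smul_dotProduct, ← hU, ← hUhat, ← hUcheck, hϱ]
    have h2 : exp (2 * muinf * s) = exp (muinf * s) ^ 2 := by rw [← exp_nat_mul]; ring_nf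
    have hm1 : exp (-muinf * s) = (exp (muinf * s))⁻¹ := by rw [← exp_neg]; ring_nf
    have hx : exp (muinf * s) ≠ 0 := (exp_pos _).ne'
    rw [h2, hm1]
    field_simp
    ring
  rw [hσ, intervalIntegral.integral_congr (fun s _ => integrand_eq s),
    two_mul_exp_neg_mul_integral_exp_two_mul_add_exp_add_const hmuinfpos.ne', hG, hG]
  simp only [Nat.cast_zero, Nat.cast_one, Nat.cast_ofNat, neg_zero, zero_mul, exp_zero,
    neg_one_mul]
  field_simp
  ring

/-- Closed-form evaluation of the transient variance
`σ_m²(t) = 2 e^{-2μ∞t} ∫_0^t e^{2μ∞s} πᵀ(Λ - ϱ(s)M) D (Λ - ϱ(s)M) 1 ds`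
in terms of `G_{m,n}(t) = e^{-mμ∞t} - e^{-nμ∞t}`, `U = πᵀΛDΛ1`,
`Û = πᵀMDΛ1 + πᵀΛDM1` and `Ǔ = πᵀMDM1`. -/
theorem transient_variance_closed_form (d : ℕ)
    (pv lam mu : Fin d → ℝ) (hmu : ∀ i, 0 < mu i)
    (D : Matrix (Fin d) (Fin d) ℝ)
    (Lam Mm : Matrix (Fin d) (Fin d) ℝ)
    (hLam : Lam = Matrix.diagonal lam) (hMm : Mm = Matrix.diagonal mu)
    (laminf muinf : ℝ)
    (hlaminf : laminf = ∑ i, pv i * lam i) (hmuinf : muinf = ∑ i, pv i * mu i)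
    (hmuinfpos : 0 < muinf)
    (ϱc : ℝ) (hϱc : ϱc = laminf / muinf)
    (ϱ : ℝ → ℝ) (hϱ : ∀ s, ϱ s = ϱc * (1 - Real.exp (-muinf * s)))
    (σm2 : ℝ → ℝ)
    (hσ : ∀ t, σm2 t = 2 * Real.exp (-2 * muinf * t)
      * ∫ s in (0 : ℝ)..t, Real.exp (2 * muinf * s)
          * (pv ᵥ* ((Lam - ϱ s • Mm) * D * (Lam - ϱ s • Mm)) ⬝ᵥ (fun _ => (1 : ℝ))))
    (G : ℕ → ℕ → ℝ → ℝ)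
    (hG : ∀ m n t, G m n t = Real.exp (-(m : ℝ) * muinf * t) - Real.exp (-(n : ℝ) * muinf * t))
    (U Uhat Ucheck : ℝ)
    (hU : U = pv ᵥ* (Lam * D * Lam) ⬝ᵥ (fun _ => (1 : ℝ)))
    (hUhat : Uhat = pv ᵥ* (Mm * D * Lam) ⬝ᵥ (fun _ => (1 : ℝ))
      + pv ᵥ* (Lam * D * Mm) ⬝ᵥ (fun _ => (1 : ℝ)))
    (hUcheck : Ucheck = pv ᵥ* (Mm * D * Mm) ⬝ᵥ (fun _ => (1 : ℝ))) :
    ∀ t, 0 ≤ t →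
      σm2 t = U * (1 / muinf) * G 0 2 t
        + Uhat * (ϱc / muinf) * (2 * G 1 2 t - G 0 2 t)
        + Ucheck * (ϱc ^ 2 / muinf)
            * (G 0 2 t - 4 * G 1 2 t + 2 * muinf * t * Real.exp (-2 * muinf * t)) :=
  transient_variance_closed_form_general d pv D Lam Mm muinf hmuinfpos ϱc ϱ hϱ σm2 hσ G hG U Uhat
    Ucheck hU hUhat hUcheck
end

section
/- With G_{m,n}(t) := e^{-mμt} - e^{-nμt}, the transient variance σ_m²(t) given in the previous closed form converges as t → ∞ to σ_m² = μ∞^{-1} π^T (Λ - ϱM) D (Λ - ϱM) 1, where ϱ = λ∞/μ∞. -/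
open Matrix Real Filter

open Asymptotics MeasureTheory intervalIntegral Topology

/-! σ_m²(t) = μ∞⁻¹ · 2μ∞ e^{-2μ∞t} ∫₀ᵗ e^{2μ∞s} h(ϱ(s)) ds, where h(r) = πᵀ(Λ - rM)D(Λ - rM)1 is
continuous in r and ϱ(s) → ϱ. The weight 2μ∞ e^{-2μ∞(t-s)} on [0, t] has mass 1 - e^{-2μ∞t} → 1
and concentrates near s = t, so this exponential average of h(ϱ(s)) tends to h(ϱ). This is an
integral form of the Stolz–Cesàro theorem: ∫₀ᵗ e^{cs}(g(s) - L) ds = o(∫₀ᵗ e^{cs} ds) whenever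
g → L. -/

theorem Asymptotics.IsLittleO.intervalIntegral_atTop {E : Type*} [NormedAddCommGroup E]
    [NormedSpace ℝ E] {f : ℝ → E} {g : ℝ → ℝ} {a : ℝ} (h : f =o[atTop] g) (hg : ∀ s, 0 ≤ g s)
    (hfi : ∀ b, IntervalIntegrable f volume a b) (hgi : ∀ b, IntervalIntegrable g volume a b)
    (hg_top : Tendsto (fun t => ∫ s in a..t, g s) atTop atTop) :
    (fun t => ∫ s in a..t, f s) =o[atTop] fun t => ∫ s in a..t, g s := by
  refine isLittleO_iff.2 fun ε hε => ?_
  obtain ⟨T, hT⟩ : ∃ T, ∀ s ≥ T, ‖f s‖ ≤ ε / 2 * g s := by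
    simpa only [Real.norm_of_nonneg (hg _), eventually_atTop] using
      isLittleO_iff.1 h (half_pos hε)
  set M := max a T
  have hM : (fun _ => ∫ s in a..M, f s) =o[atTop] fun t => ∫ s in a..t, g s :=
    isLittleO_const_left.2 (Or.inr (tendsto_norm_atTop_atTop.comp hg_top))
  filter_upwards [isLittleO_iff.1 hM (half_pos hε), eventually_ge_atTop M] with t hMt hMt'
  have hat : a ≤ t := (le_max_left _ _).trans hMt'
  have hgi' : IntervalIntegrable g volume M t := (hgi M).symm.trans (hgi t)
  have hnorm : ‖∫ s in a..t, g s‖ = ∫ s in a..t, g s :=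
    Real.norm_of_nonneg (integral_nonneg hat fun s _ => hg s)
  calc ‖∫ s in a..t, f s‖
      = ‖(∫ s in a..M, f s) + ∫ s in M..t, f s‖ := by
        rw [integral_add_adjacent_intervals (hfi M) ((hfi M).symm.trans (hfi t))]
    _ ≤ ‖∫ s in a..M, f s‖ + ∫ s in M..t, ε / 2 * g s :=
        norm_add_le_of_le le_rfl <| norm_integral_le_of_norm_le hMt'
          (ae_of_all _ fun s hs => hT s ((le_max_right _ _).trans hs.1.le)) (hgi'.const_mul _)
    _ ≤ ε / 2 * ‖∫ s in a..t, g s‖ + ε / 2 * ∫ s in a..t, g s := by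
        rw [intervalIntegral.integral_const_mul]
        gcongr
        exact integral_mono_interval (le_max_left _ _) hMt' le_rfl
          (ae_of_all _ hg) (hgi t)
    _ = ε * ‖∫ s in a..t, g s‖ := by rw [hnorm]; ring

theorem tendsto_exp_neg_mul_atTop_nhds_zero {c : ℝ} (hc : 0 < c) :
    Tendsto (fun t => exp (-c * t)) atTop (𝓝 0) := by
  simpa only [Function.comp_def, id, neg_mul] using
    tendsto_exp_neg_atTop_nhds_zero.comp (tendsto_id.const_mul_atTop hc)

theorem integral_exp_mul_of_ne_zero {c : ℝ} (hc : c ≠ 0) (a b : ℝ) :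
    ∫ s in a..b, exp (c * s) = (exp (c * b) - exp (c * a)) / c := by
  rw [intervalIntegral.integral_comp_mul_left (fun s => exp s) hc, integral_exp, smul_eq_mul,
    inv_mul_eq_div]

theorem tendsto_mul_exp_neg_mul_integral_exp_mul {c L : ℝ} {g : ℝ → ℝ} (hc : 0 < c)
    (hg : Continuous g) (hgL : Tendsto g atTop (𝓝 L)) :
    Tendsto (fun t => c * exp (-c * t) * ∫ s in (0 : ℝ)..t, exp (c * s) * g s)
      atTop (𝓝 L) := by
  have hE : ∀ t, ∫ s in (0 : ℝ)..t, exp (c * s) = (exp (c * t) - 1) / c := fun t => by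
    rw [integral_exp_mul_of_ne_zero hc.ne', mul_zero, exp_zero]
  have hE_top : Tendsto (fun t => ∫ s in (0 : ℝ)..t, exp (c * s)) atTop atTop := by
    simp only [hE]
    exact (tendsto_atTop_add_const_right _ (-1)
      (tendsto_exp_atTop.comp (tendsto_id.const_mul_atTop hc))).atTop_div_const hc
  have hdev : (fun t => ∫ s in (0 : ℝ)..t, exp (c * s) * (g s - L)) =o[atTop]
      fun t => ∫ s in (0 : ℝ)..t, exp (c * s) := by
    refine IsLittleO.intervalIntegral_atTop ?_ (fun s => (exp_pos _).le)
      (fun b => by apply Continuous.intervalIntegrable; fun_prop)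
      (fun b => by apply Continuous.intervalIntegrable; fun_prop) hE_top
    simpa using (isBigO_refl (fun s => exp (c * s)) atTop).mul_isLittleO
      ((isLittleO_one_iff ℝ).2 (tendsto_sub_nhds_zero_iff.2 hgL))
  have hlim := (hdev.tendsto_div_nhds_zero.add (tendsto_const_nhds (x := L))).mul
    ((tendsto_const_nhds (x := (1 : ℝ))).sub (tendsto_exp_neg_mul_atTop_nhds_zero hc))
  rw [zero_add, sub_zero, mul_one] at hlim
  refine hlim.congr' ?_
  filter_upwards [eventually_gt_atTop 0] with t ht
  have hsplit : ∫ s in (0 : ℝ)..t, exp (c * s) * g s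
      = (∫ s in (0 : ℝ)..t, exp (c * s) * (g s - L)) + L * ∫ s in (0 : ℝ)..t, exp (c * s) := by
    rw [← intervalIntegral.integral_const_mul, ← intervalIntegral.integral_add
      (by apply Continuous.intervalIntegrable; fun_prop)
      (by apply Continuous.intervalIntegrable; fun_prop)]
    congr 1 with s
    ring
  have hgt : 1 < exp (c * t) := one_lt_exp_iff.2 (by positivity)
  rw [hsplit, hE, neg_mul, Real.exp_neg]
  field_simp [(sub_pos.2 hgt).ne']

theorem transient_variance_tendsto_stationary_general (d : ℕ)
    (pv : Fin d → ℝ) (D : Matrix (Fin d) (Fin d) ℝ) (Lam Mm : Matrix (Fin d) (Fin d) ℝ)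
    (muinf : ℝ) (hmuinfpos : 0 < muinf) (ϱc : ℝ)
    (ϱ : ℝ → ℝ) (hϱ : ∀ s, ϱ s = ϱc * (1 - Real.exp (-muinf * s)))
    (σm2 : ℝ → ℝ)
    (hσ : ∀ t, σm2 t = 2 * Real.exp (-2 * muinf * t)
      * ∫ s in (0 : ℝ)..t, Real.exp (2 * muinf * s)
          * (pv ᵥ* ((Lam - ϱ s • Mm) * D * (Lam - ϱ s • Mm)) ⬝ᵥ (fun _ => (1 : ℝ)))) :
    Tendsto σm2 atTop (nhds
      (muinf⁻¹ * (pv ᵥ* ((Lam - ϱc • Mm) * D * (Lam - ϱc • Mm)) ⬝ᵥ (fun _ => (1 : ℝ))))) := by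
  set q : ℝ → ℝ := fun r => pv ᵥ* ((Lam - r • Mm) * D * (Lam - r • Mm)) ⬝ᵥ (fun _ => (1 : ℝ))
  have hq : Continuous q := by fun_prop
  have hϱ_eq : ϱ = fun s => ϱc * (1 - Real.exp (-muinf * s)) := funext hϱ
  have hϱ_cont : Continuous ϱ := by rw [hϱ_eq]; fun_prop
  have hϱ_lim : Tendsto ϱ atTop (𝓝 ϱc) := by
    rw [hϱ_eq]
    simpa using ((tendsto_exp_neg_mul_atTop_nhds_zero hmuinfpos).const_sub 1).const_mul ϱc
  have hlim := (tendsto_mul_exp_neg_mul_integral_exp_mul (by positivity : 0 < 2 * muinf)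
    (g := fun s => q (ϱ s)) (hq.comp hϱ_cont) ((hq.tendsto ϱc).comp hϱ_lim)).const_mul muinf⁻¹
  have hweight : ∀ t, muinf⁻¹ * (2 * muinf * exp (-(2 * muinf) * t)) = 2 * exp (-2 * muinf * t) :=
    fun t => by field_simp
  refine hlim.congr fun t => ?_
  rw [hσ, ← mul_assoc, hweight]

/-- The transient variance `σ_m²(t)` converges, as `t → ∞`, to the stationary variance
`σ_m² = μ∞⁻¹ πᵀ (Λ - ϱM) D (Λ - ϱM) 1` with `ϱ = λ∞/μ∞`. -/
theorem transient_variance_tendsto_stationary (d : ℕ)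
    (pv lam mu : Fin d → ℝ) (hmu : ∀ i, 0 < mu i)
    (D : Matrix (Fin d) (Fin d) ℝ)
    (Lam Mm : Matrix (Fin d) (Fin d) ℝ)
    (hLam : Lam = Matrix.diagonal lam) (hMm : Mm = Matrix.diagonal mu)
    (laminf muinf : ℝ)
    (hlaminf : laminf = ∑ i, pv i * lam i) (hmuinf : muinf = ∑ i, pv i * mu i)
    (hmuinfpos : 0 < muinf)
    (ϱc : ℝ) (hϱc : ϱc = laminf / muinf)
    (ϱ : ℝ → ℝ) (hϱ : ∀ s, ϱ s = ϱc * (1 - Real.exp (-muinf * s)))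
    (σm2 : ℝ → ℝ)
    (hσ : ∀ t, σm2 t = 2 * Real.exp (-2 * muinf * t)
      * ∫ s in (0 : ℝ)..t, Real.exp (2 * muinf * s)
          * (pv ᵥ* ((Lam - ϱ s • Mm) * D * (Lam - ϱ s • Mm)) ⬝ᵥ (fun _ => (1 : ℝ)))) :
    Tendsto σm2 atTop (nhds
      (muinf⁻¹ * (pv ᵥ* ((Lam - ϱc • Mm) * D * (Lam - ϱc • Mm)) ⬝ᵥ (fun _ => (1 : ℝ))))) :=
  transient_variance_tendsto_stationary_general d pv D Lam Mm muinf hmuinfpos ϱc ϱ hϱ σm2 hσ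
end
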